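/- Let n ≥ 1, let A be an n×n real sub-generator matrix, let α ∈ ℝⁿ be a probability vector, and let μ > 0. Then 0 ≤ τ(μ) ≤ 1, where τ(μ) = αᵀ (μI − A)⁻¹ ((−A)𝟙). -/

import Mathlib

/-!
Write `M = μ • 1 - A`. A discrete maximum principle holds for `M`: if `M x ≥ 0` then `x ≥ 0`,
because at an index `i` where `x` is smallest the off-diagonal terms `A i j (x j - x i)` are
nonnegative, leaving `(μ - ∑ j, A i j) x i ≥ (M x) i ≥ 0`. Applied to `±x` it makes `M` injective,
hence invertible, and it makes `M⁻¹` monotone. Since `M 𝟙 = μ 𝟙 + (-A) 𝟙`, the vector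
`x = M⁻¹ ((-A) 𝟙)` satisfies `0 ≤ x` and `M (𝟙 - x) = μ 𝟙 ≥ 0`, so `0 ≤ x ≤ 𝟙`, and averaging
against the probability vector `α` gives `τ(μ) ∈ [0, 1]`.
-/

open Matrix

namespace Matrix

variable {ι : Type*} [Fintype ι]

structure IsSubGenerator (A : Matrix ι ι ℝ) : Prop where
  offDiag_nonneg : ∀ i j, i ≠ j → 0 ≤ A i j
  rowSum_nonpos : ∀ i, ∑ j, A i j ≤ 0

namespace IsSubGenerator

variable {A : Matrix ι ι ℝ}

theorem rowSum_mul_le_mulVec_of_isMin (hA : A.IsSubGenerator) {x : ι → ℝ} {i : ι}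
    (hi : ∀ j, x i ≤ x j) : (∑ j, A i j) * x i ≤ (A *ᵥ x) i := by
  rw [Finset.sum_mul, mulVec, dotProduct]
  refine Finset.sum_le_sum fun j _ => ?_
  rcases eq_or_ne i j with rfl | hij
  · rfl
  · exact mul_le_mul_of_nonneg_left (hi j) (hA.offDiag_nonneg i j hij)

variable [DecidableEq ι]

theorem nonneg_of_nonneg_mulVec (hA : A.IsSubGenerator) {μ : ℝ} (hμ : 0 < μ) {x : ι → ℝ}
    (hx : 0 ≤ (μ • (1 : Matrix ι ι ℝ) - A) *ᵥ x) : 0 ≤ x := by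
  intro j
  have : Nonempty ι := ⟨j⟩
  obtain ⟨i, hi⟩ := Finite.exists_min x
  have hMx : 0 ≤ μ * x i - (A *ᵥ x) i := by
    simpa [sub_mulVec, smul_mulVec] using hx i
  have hlower := hA.rowSum_mul_le_mulVec_of_isMin hi
  have hxi : 0 ≤ (μ - ∑ j, A i j) * x i := by linarith
  have hpos : 0 < μ - ∑ j, A i j := by linarith [hA.rowSum_nonpos i]
  exact (nonneg_of_mul_nonneg_right hxi hpos).trans (hi j)

theorem isUnit_smul_one_sub (hA : A.IsSubGenerator) {μ : ℝ} (hμ : 0 < μ) :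
    IsUnit (μ • (1 : Matrix ι ι ℝ) - A) := by
  refine mulVec_injective_iff_isUnit.mp fun x y hxy => ?_
  have hpos := hA.nonneg_of_nonneg_mulVec hμ (x := x - y) (by rw [mulVec_sub, hxy, sub_self])
  have hneg := hA.nonneg_of_nonneg_mulVec hμ (x := y - x) (by rw [mulVec_sub, hxy, sub_self])
  exact le_antisymm (sub_nonneg.mp hneg) (sub_nonneg.mp hpos)

theorem smul_one_sub_mulVec_inv_mulVec (hA : A.IsSubGenerator) {μ : ℝ} (hμ : 0 < μ)
    (y : ι → ℝ) : (μ • (1 : Matrix ι ι ℝ) - A) *ᵥ ((μ • (1 : Matrix ι ι ℝ) - A)⁻¹ *ᵥ y) = y := by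
  rw [mulVec_mulVec, mul_nonsing_inv _ ((isUnit_iff_isUnit_det _).mp (hA.isUnit_smul_one_sub hμ)),
    one_mulVec]

theorem inv_mulVec_nonneg (hA : A.IsSubGenerator) {μ : ℝ} (hμ : 0 < μ) {y : ι → ℝ}
    (hy : 0 ≤ y) : 0 ≤ (μ • (1 : Matrix ι ι ℝ) - A)⁻¹ *ᵥ y :=
  hA.nonneg_of_nonneg_mulVec hμ (by rwa [hA.smul_one_sub_mulVec_inv_mulVec hμ])

end IsSubGenerator

end Matrix

theorem tau_mem_unitInterval
    (n : ℕ) (A : Matrix (Fin n) (Fin n) ℝ)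
    (hoff : ∀ i j, i ≠ j → 0 ≤ A i j)
    (hrow : ∀ i, ∑ j, A i j ≤ 0)
    (α : Fin n → ℝ) (hα0 : ∀ i, 0 ≤ α i) (hα1 : ∑ i, α i = 1)
    (μ : ℝ) (hμ : 0 < μ) :
    0 ≤ α ⬝ᵥ ((μ • (1 : Matrix (Fin n) (Fin n) ℝ) - A)⁻¹ *ᵥ ((-A) *ᵥ (1 : Fin n → ℝ))) ∧
      α ⬝ᵥ ((μ • (1 : Matrix (Fin n) (Fin n) ℝ) - A)⁻¹ *ᵥ ((-A) *ᵥ (1 : Fin n → ℝ))) ≤ 1 := by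
  have hA : A.IsSubGenerator := ⟨hoff, hrow⟩
  set x := (μ • (1 : Matrix (Fin n) (Fin n) ℝ) - A)⁻¹ *ᵥ ((-A) *ᵥ (1 : Fin n → ℝ))
  have hexit : 0 ≤ (-A) *ᵥ (1 : Fin n → ℝ) := fun i => by
    simpa [neg_mulVec, mulVec, dotProduct] using hrow i
  have hx0 : 0 ≤ x := hA.inv_mulVec_nonneg hμ hexit
  have hx1 : x ≤ 1 := by
    refine sub_nonneg.mp (hA.nonneg_of_nonneg_mulVec hμ ?_)
    rw [mulVec_sub, hA.smul_one_sub_mulVec_inv_mulVec hμ]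
    simp only [sub_mulVec, smul_mulVec, one_mulVec, neg_mulVec, sub_neg_eq_add, sub_add_cancel]
    exact smul_nonneg hμ.le zero_le_one
  exact ⟨dotProduct_nonneg_of_nonneg hα0 hx0,
    (dotProduct_le_dotProduct_of_nonneg_left hx1 hα0).trans_eq
      (by rw [dotProduct_one, hα1])⟩
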